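/- arXiv:0912.4827 — 3 statements merged into one kernel-verified Lean document; each statement's English description precedes it below -/
import Mathlib

section
/- Let (X,S) be a non-degenerate, involutive and braided set-theoretical solution on a finite set X, and let M be its structure monoid. Then for any two distinct x, y ∈ X, the equality x·g_x^{-1}(y) = y·g_y^{-1}(x) holds in M, and this common element is a right lcm of x and y in M. In particular any two generators admit a right lcm represented by a word of length two, and the set X ∪ {1} is closed under right complement. -/
namespace YBE

/-- `(X,S)` is non-degenerate: all the maps `g_x = y ↦ S(x,y).1` and
`f_y = x ↦ S(x,y).2` are bijective. -/
def Nondegenerate {X : Type*} (S : X × X → X × X) : Prop :=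
  (∀ x : X, Function.Bijective fun y => (S (x, y)).1) ∧
  (∀ y : X, Function.Bijective fun x => (S (x, y)).2)

/-- `(X,S)` is involutive: `S ∘ S = id`. -/
def InvolutiveSol {X : Type*} (S : X × X → X × X) : Prop := S ∘ S = id

/-- `S¹² = S × id` on `X × X × X`. -/
def S12 {X : Type*} (S : X × X → X × X) : X × X × X → X × X × X :=
  fun p => ((S (p.1, p.2.1)).1, (S (p.1, p.2.1)).2, p.2.2)

/-- `S²³ = id × S` on `X × X × X`. -/
def S23 {X : Type*} (S : X × X → X × X) : X × X × X → X × X × X :=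
  fun p => (p.1, S (p.2.1, p.2.2))

/-- `(X,S)` is braided: `S¹² ∘ S²³ ∘ S¹² = S²³ ∘ S¹² ∘ S²³`. -/
def BraidedSol {X : Type*} (S : X × X → X × X) : Prop :=
  S12 S ∘ S23 S ∘ S12 S = S23 S ∘ S12 S ∘ S23 S

/-- The map `g_x : y ↦ S(x,y).1`. -/
def gmap {X : Type*} (S : X × X → X × X) (x : X) : X → X := fun y => (S (x, y)).1

/-- The map `f_y : x ↦ S(x,y).2`. -/
def fmap {X : Type*} (S : X × X → X × X) (y : X) : X → X := fun x => (S (x, y)).2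

/-- The inverse `g_x⁻¹` of the (bijective) map `g_x`. -/
noncomputable def ginv {X : Type*} [Nonempty X] (S : X × X → X × X) (x : X) : X → X :=
  Function.invFun (gmap S x)

/-- The inverse `f_y⁻¹` of the (bijective) map `f_y`. -/
noncomputable def finv {X : Type*} [Nonempty X] (S : X × X → X × X) (y : X) : X → X :=
  Function.invFun (fmap S y)

/-- The defining relations of the structure monoid: `x·y = t·z` whenever `S(x,y) = (t,z)`. -/
def ybRel {X : Type*} (S : X × X → X × X) : FreeMonoid X → FreeMonoid X → Prop :=
  fun a b => ∃ x y : X, a = FreeMonoid.of x * FreeMonoid.of y ∧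
    b = FreeMonoid.of (S (x, y)).1 * FreeMonoid.of (S (x, y)).2

/-- The structure monoid of `(X,S)`: the monoid presented by generating set `X` and
relations `x·y = t·z` for each `x,y,t,z` with `S(x,y) = (t,z)`. -/
abbrev StructureMonoid {X : Type*} (S : X × X → X × X) : Type _ :=
  (conGen (ybRel S)).Quotient

/-- The image in the structure monoid of a generator `x ∈ X`. -/
def smi {X : Type*} (S : X × X → X × X) (x : X) : StructureMonoid S :=
  (conGen (ybRel S)).mk' (FreeMonoid.of x)

/-- The defining relations of the structure group, as elements of the free group. -/
def ybGRels {X : Type*} (S : X × X → X × X) : Set (FreeGroup X) :=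
  {w | ∃ x y : X, w = FreeGroup.of x * FreeGroup.of y *
    (FreeGroup.of (S (x, y)).1 * FreeGroup.of (S (x, y)).2)⁻¹}

/-- The structure group of `(X,S)`: the group presented by generating set `X` and
relations `x·y = t·z` for each `x,y,t,z` with `S(x,y) = (t,z)`. -/
abbrev StructureGroup {X : Type*} (S : X × X → X × X) : Type _ :=
  PresentedGroup (ybGRels S)

/-- `a` left-divides `b`. -/
def LDvd {M : Type*} [Monoid M] (a b : M) : Prop := ∃ c, b = a * c

/-- `m` is a right lcm of the family `a`: each `a i` left-divides `m`, and `m`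
left-divides every common right multiple of the `a i`. -/
def IsRightLcm {M : Type*} [Monoid M] {ι : Sort*} (a : ι → M) (m : M) : Prop :=
  (∀ i, LDvd (a i) m) ∧ ∀ w, (∀ i, LDvd (a i) w) → LDvd m w

/-!
Identify `Option X` with `X ∪ {1}` (`none` standing for `1`). A generator `s` acts on it by
`x ↦ 1` if `x = s`, `x ↦ g_s⁻¹(x)` otherwise, and `1 ↦ 1`: this is the right complement of `s`
in `x`, because `x·g_x⁻¹(s) = s·g_s⁻¹(x)`. Involutivity and the braid relation make this a right
action of the structure monoid, and `x` left-divides `m` exactly when `m` sends `x` to `1`.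
If `x·u = y·v` with `x ≠ y`, then `v` sends `g_y⁻¹(x)` to `1`, so `g_y⁻¹(x)` left-divides `v`
and `y·g_y⁻¹(x)` left-divides `y·v`.
-/

section Complement

variable {X : Type*} {S : X × X → X × X}

lemma gmap_gmap_fmap (hinv : InvolutiveSol S) (s t : X) :
    gmap S (gmap S s t) (fmap S t s) = s :=
  congrArg Prod.fst (congrFun hinv (s, t))

lemma gmap_gmap_gmap_fmap (hbr : BraidedSol S) (s t z : X) :
    gmap S (gmap S s t) (gmap S (fmap S t s) z) = gmap S s (gmap S t z) :=
  (congrArg Prod.fst (congrFun hbr (s, t, z)) :)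

lemma smi_mul_smi (x y : X) :
    smi S x * smi S y = smi S (gmap S x y) * smi S (fmap S y x) := by
  simp only [smi, ← map_mul]
  exact (Con.eq _).2 (ConGen.Rel.of _ _ ⟨x, y, rfl, rfl⟩)

@[elab_as_elim]
lemma structureMonoid_induction {p : StructureMonoid S → Prop} (m : StructureMonoid S)
    (one : p 1) (smi_mul : ∀ s m, p m → p (smi S s * m)) : p m :=
  Con.induction_on m fun w => FreeMonoid.inductionOn' w one fun s _ h => smi_mul s _ h

variable [Nonempty X]

lemma gmap_ginv (hnd : Nondegenerate S) (x y : X) : gmap S x (ginv S x y) = y :=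
  Function.rightInverse_invFun (hnd.1 x).2 y

lemma ginv_gmap (hnd : Nondegenerate S) (x y : X) : ginv S x (gmap S x y) = y :=
  Function.leftInverse_invFun (hnd.1 x).1 y

lemma ginv_eq_of_gmap_eq (hnd : Nondegenerate S) {x y z : X} (h : gmap S x z = y) :
    ginv S x y = z :=
  h ▸ ginv_gmap hnd x z

lemma fmap_ginv (hnd : Nondegenerate S) (hinv : InvolutiveSol S) (x y : X) :
    fmap S (ginv S x y) x = ginv S y x := by
  have h := gmap_gmap_fmap hinv x (ginv S x y)
  rw [gmap_ginv hnd] at h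
  exact (ginv_eq_of_gmap_eq hnd h).symm

lemma smi_mul_smi_ginv (hnd : Nondegenerate S) (hinv : InvolutiveSol S) (x y : X) :
    smi S x * smi S (ginv S x y) = smi S y * smi S (ginv S y x) := by
  rw [smi_mul_smi, gmap_ginv hnd, fmap_ginv hnd hinv]

open Classical in
noncomputable def complementStep (S : X × X → X × X) (s : X) : Option X → Option X
  | none => none
  | some x => if x = s then none else some (ginv S s x)

@[simp]
lemma complementStep_none (s : X) : complementStep S s none = none := rfl

@[simp]
lemma complementStep_self (s : X) : complementStep S s (some s) = none := by
  simp [complementStep]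

lemma complementStep_of_ne {x s : X} (h : x ≠ s) :
    complementStep S s (some x) = some (ginv S s x) := by
  simp [complementStep, h]

lemma complementStep_braid (hnd : Nondegenerate S) (hinv : InvolutiveSol S)
    (hbr : BraidedSol S) (s t : X) (o : Option X) :
    complementStep S t (complementStep S s o) =
      complementStep S (fmap S t s) (complementStep S (gmap S s t) o) := by
  have hA := gmap_gmap_fmap hinv s t
  rcases o with _ | x
  · rfl
  by_cases hxs : x = s
  · subst hxs
    by_cases hxt : x = gmap S x t
    · rw [← hxt]; simp
    · rw [complementStep_of_ne hxt, ginv_eq_of_gmap_eq hnd hA]; simp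
  rw [complementStep_of_ne hxs]
  by_cases hxt : x = gmap S s t
  · rw [ginv_eq_of_gmap_eq hnd hxt.symm, hxt]; simp
  have hgt : ginv S s x ≠ t := fun h => hxt (by rw [← h, gmap_ginv hnd])
  have hgt' : ginv S (gmap S s t) x ≠ fmap S t s := fun h =>
    hxs (by rw [← gmap_ginv hnd (gmap S s t) x, h, hA])
  rw [complementStep_of_ne hgt, complementStep_of_ne hxt, complementStep_of_ne hgt']
  have hb : gmap S (gmap S s t) (gmap S (fmap S t s) (ginv S t (ginv S s x))) = x := by
    rw [gmap_gmap_gmap_fmap hbr, gmap_ginv hnd, gmap_ginv hnd]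
  rw [ginv_eq_of_gmap_eq hnd hb, ginv_gmap hnd]

noncomputable def freeComplement (S : X × X → X × X) :
    FreeMonoid X →* (Function.End (Option X))ᵐᵒᵖ :=
  FreeMonoid.lift fun s => MulOpposite.op (complementStep S s)

noncomputable def complement (hnd : Nondegenerate S) (hinv : InvolutiveSol S)
    (hbr : BraidedSol S) : StructureMonoid S →* (Function.End (Option X))ᵐᵒᵖ :=
  (conGen (ybRel S)).lift (freeComplement S) <| Con.conGen_le.2 <| by
    rintro _ _ ⟨s, t, rfl, rfl⟩
    refine (Con.ker_rel _).2 (congrArg MulOpposite.op (funext fun o => ?_))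
    exact complementStep_braid hnd hinv hbr s t o

variable (hnd : Nondegenerate S) (hinv : InvolutiveSol S) (hbr : BraidedSol S)

lemma complement_smi (s : X) :
    (complement hnd hinv hbr (smi S s)).unop = complementStep S s := rfl

lemma complement_mul_apply (a b : StructureMonoid S) (o : Option X) :
    (complement hnd hinv hbr (a * b)).unop o =
      (complement hnd hinv hbr b).unop ((complement hnd hinv hbr a).unop o) := by
  rw [map_mul, MulOpposite.unop_mul, Function.End.mul_def]; rfl

lemma complement_apply_none (m : StructureMonoid S) :
    (complement hnd hinv hbr m).unop none = none := by
  induction m using structureMonoid_induction with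
  | one => rfl
  | smi_mul s m ih => rw [complement_mul_apply, complement_smi, complementStep_none, ih]

lemma ldvd_smi_iff (a : X) (m : StructureMonoid S) :
    LDvd (smi S a) m ↔ (complement hnd hinv hbr m).unop (some a) = none := by
  constructor
  · rintro ⟨c, rfl⟩
    rw [complement_mul_apply, complement_smi, complementStep_self, complement_apply_none]
  · induction m using structureMonoid_induction generalizing a with
    | one => exact fun h => absurd h (Option.some_ne_none a)
    | smi_mul s m ih =>
      intro h
      rw [complement_mul_apply, complement_smi] at h
      by_cases has : a = s
      · exact ⟨m, by rw [has]⟩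
      rw [complementStep_of_ne has] at h
      obtain ⟨c, rfl⟩ := ih _ h
      refine ⟨smi S (fmap S (ginv S s a) s) * c, ?_⟩
      rw [← mul_assoc, ← mul_assoc, smi_mul_smi, gmap_ginv hnd]

end Complement

theorem stmt4_general {X : Type*} [Nonempty X] (S : X × X → X × X)
    (hnd : Nondegenerate S) (hinv : InvolutiveSol S) (hbr : BraidedSol S) :
    ∀ x y : X, x ≠ y →
      smi S x * smi S (ginv S x y) = smi S y * smi S (ginv S y x) ∧
      IsRightLcm (fun b : Bool => if b then smi S x else smi S y)
        (smi S x * smi S (ginv S x y)) := by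
  intro x y hxy
  have hcomm := smi_mul_smi_ginv hnd hinv x y
  refine ⟨hcomm, fun b => ?_, fun w hw => ?_⟩
  · cases b
    · exact ⟨smi S (ginv S y x), hcomm⟩
    · exact ⟨smi S (ginv S x y), rfl⟩
  have hx : LDvd (smi S x) w := hw true
  obtain ⟨v, rfl⟩ : LDvd (smi S y) w := hw false
  rw [ldvd_smi_iff hnd hinv hbr, complement_mul_apply, complement_smi,
    complementStep_of_ne hxy] at hx
  obtain ⟨c, rfl⟩ := (ldvd_smi_iff hnd hinv hbr _ v).2 hx
  exact ⟨c, by rw [hcomm, mul_assoc]⟩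

/-- In the structure monoid, for distinct `x, y ∈ X` one has
`x·g_x⁻¹(y) = y·g_y⁻¹(x)`, and this common element is a right lcm of `x` and `y`;
in particular the right lcm of two generators is represented by a word of length two and the
right complement of one generator on another is again a generator. -/
theorem stmt4 {X : Type*} [Finite X] [Nonempty X] (S : X × X → X × X)
    (hnd : Nondegenerate S) (hinv : InvolutiveSol S) (hbr : BraidedSol S) :
    ∀ x y : X, x ≠ y →
      smi S x * smi S (ginv S x y) = smi S y * smi S (ginv S y x) ∧
      IsRightLcm (fun b : Bool => if b then smi S x else smi S y)
        (smi S x * smi S (ginv S x y)) :=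
  stmt4_general S hnd hinv hbr
end YBE
end

section
/- Let (X,S) be a non-degenerate, involutive and braided set-theoretical solution on a finite set X. Then (X,S) is indecomposable if and only if the subgroup of the permutation group of X generated by {g_x : x ∈ X} acts transitively on X. (This is the combinatorial content of the theorem that the structure monoid of (X,S) is a Δ-pure Garside monoid if and only if (X,S) is indecomposable.) -/
namespace YBE

/-- The subgroup of the permutation group of `X` generated by the maps `g_x`. -/
def gGroup {X : Type*} (S : X × X → X × X) : Subgroup (Equiv.Perm X) :=
  Subgroup.closure {e : Equiv.Perm X | ∃ x : X, ⇑e = gmap S x}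

/-- The orbit of `y` under the subgroup generated by the maps `g_x`. -/
def gOrbit {X : Type*} (S : X × X → X × X) (y : X) : Set X :=
  {z : X | ∃ e ∈ gGroup S, e y = z}


/-- `Y ⊆ X` is an invariant subset: `S(Y × Y) ⊆ Y × Y`. -/
def InvariantSet {X : Type*} (S : X × X → X × X) (Y : Set X) : Prop :=
  ∀ a ∈ Y, ∀ b ∈ Y, (S (a, b)).1 ∈ Y ∧ (S (a, b)).2 ∈ Y

/-- The restriction of `S` to an invariant subset `Y` is non-degenerate. -/
def NondegenerateOn {X : Type*} (S : X × X → X × X) (Y : Set X) : Prop :=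
  (∀ x ∈ Y, Set.BijOn (gmap S x) Y Y) ∧ (∀ y ∈ Y, Set.BijOn (fmap S y) Y Y)

/-- `(X,S)` is decomposable: `X` is the union of two disjoint nonempty invariant subsets
on which the restrictions of `S` are non-degenerate. -/
def Decomposable {X : Type*} (S : X × X → X × X) : Prop :=
  ∃ Y Z : Set X, Y.Nonempty ∧ Z.Nonempty ∧ Disjoint Y Z ∧ Y ∪ Z = Set.univ ∧
    InvariantSet S Y ∧ InvariantSet S Z ∧ NondegenerateOn S Y ∧ NondegenerateOn S Z

/-!
The pieces of a decomposition are exactly the unions of orbits of the group generated by the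
maps `g_x`. Such a union `A` is invariant with nondegenerate restriction: each `g_x` preserves `A`,
and involutivity gives `g_t (f_y u) = u` for `t = S(u,y).1`, so each `f_y` preserves `A` as well.
Conversely, in a decomposition `X = Y ⊔ Z` each `g_x` restricts to a bijection of `Y` or of `Z`,
hence of both, so `Y` is a union of orbits and the action is not transitive.
-/

open Set Function
open scoped Pointwise

section GStable

variable {X : Type*} {S : X × X → X × X} {A : Set X}

lemma Nondegenerate.gmap_bijective (hnd : Nondegenerate S) (x : X) : Bijective (gmap S x) :=
  hnd.1 x

lemma Nondegenerate.fmap_bijective (hnd : Nondegenerate S) (y : X) : Bijective (fmap S y) :=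
  hnd.2 y

noncomputable def gperm (hnd : Nondegenerate S) (x : X) : Equiv.Perm X :=
  Equiv.ofBijective (gmap S x) (hnd.gmap_bijective x)

lemma gperm_mem_gGroup (hnd : Nondegenerate S) (x : X) : gperm hnd x ∈ gGroup S :=
  Subgroup.subset_closure ⟨x, rfl⟩

lemma InvolutiveSol.gmap_fst_snd (hinv : InvolutiveSol S) (a b : X) :
    gmap S (S (a, b)).1 (S (a, b)).2 = a :=
  congrArg Prod.fst (congrFun hinv (a, b))

/-- `A` is a union of orbits of `gGroup S`. -/
def GStable (S : X × X → X × X) (A : Set X) : Prop := ∀ x, gmap S x '' A = A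

lemma GStable.compl (hnd : Nondegenerate S) (hA : GStable S A) : GStable S Aᶜ := fun x => by
  rw [image_compl_eq (hnd.gmap_bijective x), hA x]

lemma GStable.le_stabilizer (hA : GStable S A) :
    gGroup S ≤ MulAction.stabilizer (Equiv.Perm X) A :=
  Subgroup.closure_le _ |>.2 fun e ⟨x, he⟩ => by
    rw [SetLike.mem_coe, MulAction.mem_stabilizer_iff, ← image_smul]
    simpa only [Equiv.Perm.smul_def, he] using hA x

lemma GStable.fmap_preimage_eq (hnd : Nondegenerate S) (hinv : InvolutiveSol S)
    (hA : GStable S A) (y : X) : fmap S y ⁻¹' A = A := by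
  ext u
  change fmap S y u ∈ A ↔ u ∈ A
  conv_rhs => rw [← hinv.gmap_fst_snd u y, ← hA (S (u, y)).1]
  exact ((hnd.gmap_bijective _).injective.mem_set_image).symm

lemma GStable.invariantSet (hnd : Nondegenerate S) (hinv : InvolutiveSol S)
    (hA : GStable S A) : InvariantSet S A := fun a ha b hb =>
  ⟨hA a ▸ mem_image_of_mem (gmap S a) hb, (hA.fmap_preimage_eq hnd hinv b).ge ha⟩

lemma GStable.nondegenerateOn (hnd : Nondegenerate S) (hinv : InvolutiveSol S)
    (hA : GStable S A) : NondegenerateOn S A :=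
  ⟨fun x _ => by
      simpa only [hA x] using (hnd.gmap_bijective x).injective.injOn.bijOn_image (s := A),
    fun y _ => by
      simpa only [hA.fmap_preimage_eq hnd hinv y] using
        (hnd.fmap_bijective y).bijOn_preimage (t := A)⟩

lemma gStable_gOrbit (hnd : Nondegenerate S) (a : X) : GStable S (gOrbit S a) := by
  intro x
  ext z
  constructor
  · rintro ⟨_, ⟨e, he, rfl⟩, rfl⟩
    exact ⟨gperm hnd x * e, mul_mem (gperm_mem_gGroup hnd x) he, rfl⟩
  · rintro ⟨e, he, rfl⟩
    have hx := gperm_mem_gGroup hnd x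
    exact ⟨((gperm hnd x)⁻¹ * e) a, ⟨_, mul_mem (inv_mem hx) he, rfl⟩,
      (gperm hnd x).apply_symm_apply (e a)⟩

lemma gStable_of_nondegenerateOn_compl (hnd : Nondegenerate S) (hA : NondegenerateOn S A)
    (hAc : NondegenerateOn S Aᶜ) : GStable S A := by
  intro x
  by_cases hx : x ∈ A
  · exact (hA.1 x hx).image_eq
  · simpa only [compl_compl] using ((hAc.1 x hx).compl (hnd.gmap_bijective x)).image_eq

end GStable

theorem stmt10_general {X : Type*} (S : X × X → X × X)
    (hnd : Nondegenerate S) (hinv : InvolutiveSol S) :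
    ¬ Decomposable S ↔ ∀ a b : X, ∃ e ∈ gGroup S, e a = b := by
  constructor
  · intro hind a b
    by_contra hab
    have hO := gStable_gOrbit hnd a
    exact hind ⟨gOrbit S a, (gOrbit S a)ᶜ, ⟨a, 1, one_mem _, rfl⟩, ⟨b, hab⟩,
      disjoint_compl_right, union_compl_self _, hO.invariantSet hnd hinv,
      (hO.compl hnd).invariantSet hnd hinv, hO.nondegenerateOn hnd hinv,
      (hO.compl hnd).nondegenerateOn hnd hinv⟩
  · rintro htrans ⟨Y, Z, ⟨y, hy⟩, ⟨z, hz⟩, hdisj, hunion, -, -, hY, hZ⟩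
    obtain rfl : Z = Yᶜ := (IsCompl.of_eq hdisj.eq_bot hunion).compl_eq.symm
    obtain ⟨e, he, rfl⟩ := htrans y z
    have hYe : e • Y = Y := (gStable_of_nondegenerateOn_compl hnd hY hZ).le_stabilizer he
    exact hz (hYe ▸ smul_mem_smul_set hy)

/-- `(X,S)` is indecomposable iff the subgroup generated by the maps `g_x` acts
transitively on `X`. -/
theorem stmt10 {X : Type*} [Finite X] (S : X × X → X × X)
    (hnd : Nondegenerate S) (hinv : InvolutiveSol S) (hbr : BraidedSol S) :
    ¬ Decomposable S ↔ ∀ a b : X, ∃ e ∈ gGroup S, e a = b :=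
  stmt10_general S hnd hinv
end YBE
end

section
/- Let X be a finite set and f, g : X → X bijections with f ∘ g = g ∘ f, and let G be the group presented by generating set X with relations x·y = g(y)·f(x) for all x, y ∈ X (the structure group of the not-necessarily-involutive permutation solution S(x,y) = (g(y), f(x))). Let X' = X/≡, where x ≡ x' iff (f ∘ g)^k(x) = x' for some k ≥ 0, and let G' be the group presented by generating set X' with relations [x]·[y] = [g(y)]·[f(x)] for all [x],[y] ∈ X' (the structure group of the induced involutive permutation solution S'([x],[y]) = ([g(y)],[f(x)])). Then the quotient map x ↦ [x] on generators extends to a group isomorphism G ≅ G'. -/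
/-!
The relation `g b · b = g b · f (g b)` (the instance `x = g b`, `y = b`) cancels to
`b = (f ∘ g) b` in the structure group, so generators in the same `≡`-class are already equal
there. Identifying generators that are equal in a presented group gives an isomorphic group,
and the relations of the quotient solution are exactly the images of those of `S`.
-/

namespace YBE

/-- The defining relations of the structure group of the permutation solution
`S(x,y) = (g(y), f(x))`: `x·y = g(y)·f(x)` for all `x, y ∈ X`. -/
def permRels {X : Type*} (f g : X → X) : Set (FreeGroup X) :=
  {w | ∃ x y : X, w = FreeGroup.of x * FreeGroup.of y *
    (FreeGroup.of (g y) * FreeGroup.of (f x))⁻¹}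

/-- The relation `x ≡ x′` iff `(f ∘ g)^[k] x = x′` for some `k ≥ 0`. -/
def pgRel {X : Type*} (f g : X → X) : X → X → Prop :=
  fun a b => ∃ k : ℕ, (f ∘ g)^[k] a = b


/-- The defining relations of the structure group of the induced permutation solution on
`X/≡`: `[x]·[y] = [g(y)]·[f(x)]`. -/
def permRelsQ {X : Type*} (f g : X → X) : Set (FreeGroup (Quot (pgRel f g))) :=
  {w | ∃ x y : X, w =
    FreeGroup.of (Quot.mk (pgRel f g) x) * FreeGroup.of (Quot.mk (pgRel f g) y) *
    (FreeGroup.of (Quot.mk (pgRel f g) (g y)) *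
      FreeGroup.of (Quot.mk (pgRel f g) (f x)))⁻¹}

end YBE

namespace PresentedGroup

variable {α : Type*} {rels : Set (FreeGroup α)}

theorem of_mul_of_eq_of_mul_inv_mem {a b c d : α}
    (h : FreeGroup.of a * FreeGroup.of b * (FreeGroup.of c * FreeGroup.of d)⁻¹ ∈ rels) :
    (of a * of b : PresentedGroup rels) = of c * of d := by
  have := mk_eq_mk_of_mul_inv_mem h
  rwa [map_mul, map_mul] at this

section QuotGenerators

variable (r : α → α → Prop)

def toQuotGenerators :
    PresentedGroup rels →* PresentedGroup (FreeGroup.map (Quot.mk r) '' rels) :=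
  PresentedGroup.map (FreeGroup.map (Quot.mk r)) (Set.mapsTo_image _ _)

theorem toQuotGenerators_of (a : α) :
    toQuotGenerators (rels := rels) r (of a) = of (Quot.mk r a) :=
  rfl

variable {r} (h : ∀ a b, r a b → (of a : PresentedGroup rels) = of b)

def ofQuotGenerators :
    PresentedGroup (FreeGroup.map (Quot.mk r) '' rels) →* PresentedGroup rels :=
  toGroup (f := Quot.lift of h) <| by
    rintro _ ⟨w, hw, rfl⟩
    have : (FreeGroup.lift (Quot.lift of h)).comp (FreeGroup.map (Quot.mk r)) = mk rels :=
      FreeGroup.ext_hom _ _ fun _ => by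
        rw [MonoidHom.comp_apply, FreeGroup.map.of, FreeGroup.lift_apply_of]
        rfl
    rw [← MonoidHom.comp_apply, this]
    exact one_of_mem hw

theorem ofQuotGenerators_of (a : α) : ofQuotGenerators h (of (Quot.mk r a)) = of a :=
  toGroup.of _

def quotGeneratorsEquiv :
    PresentedGroup rels ≃* PresentedGroup (FreeGroup.map (Quot.mk r) '' rels) :=
  MonoidHom.toMulEquiv (toQuotGenerators r) (ofQuotGenerators h)
    (ext fun a => by
      rw [MonoidHom.comp_apply, toQuotGenerators_of, ofQuotGenerators_of, MonoidHom.id_apply])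
    (ext fun a => by
      induction a using Quot.ind
      rw [MonoidHom.comp_apply, ofQuotGenerators_of, toQuotGenerators_of, MonoidHom.id_apply])

theorem quotGeneratorsEquiv_of (a : α) :
    quotGeneratorsEquiv h (of a) = of (Quot.mk r a) :=
  rfl

end QuotGenerators

end PresentedGroup

namespace YBE

section Permutation

variable {X : Type*} (f g : X → X)

theorem permRels_of_mul_of (x y : X) :
    (PresentedGroup.of x * PresentedGroup.of y : PresentedGroup (permRels f g)) =
      PresentedGroup.of (g y) * PresentedGroup.of (f x) :=
  PresentedGroup.of_mul_of_eq_of_mul_inv_mem ⟨x, y, rfl⟩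

theorem permRels_of_comp_apply (b : X) :
    (PresentedGroup.of ((f ∘ g) b) : PresentedGroup (permRels f g)) = PresentedGroup.of b :=
  (mul_left_cancel (permRels_of_mul_of f g (g b) b)).symm

theorem permRels_of_iterate (k : ℕ) (b : X) :
    (PresentedGroup.of ((f ∘ g)^[k] b) : PresentedGroup (permRels f g)) =
      PresentedGroup.of b := by
  induction k with
  | zero => rfl
  | succ n ih => rw [Function.iterate_succ_apply', permRels_of_comp_apply, ih]

theorem permRelsQ_eq_image :
    permRelsQ f g = FreeGroup.map (Quot.mk (pgRel f g)) '' permRels f g := by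
  ext w
  simp [permRelsQ, permRels, eq_comm]

end Permutation

theorem stmt18_general {X : Type*} (f g : X → X) :
    ∃ Φ : PresentedGroup (permRels f g) ≃* PresentedGroup (permRelsQ f g),
      ∀ x : X, Φ (PresentedGroup.of x) = PresentedGroup.of (Quot.mk (pgRel f g) x) := by
  rw [permRelsQ_eq_image]
  have hgen : ∀ a b, pgRel f g a b →
      (PresentedGroup.of a : PresentedGroup (permRels f g)) = PresentedGroup.of b := by
    rintro a _ ⟨k, rfl⟩
    exact (permRels_of_iterate f g k a).symm
  exact ⟨PresentedGroup.quotGeneratorsEquiv hgen, PresentedGroup.quotGeneratorsEquiv_of hgen⟩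

/-- The structure group of a (not necessarily involutive) permutation solution is
isomorphic to the structure group of the induced involutive permutation solution on
`X/≡`, via the quotient map on generators. -/
theorem stmt18 {X : Type*} [Finite X] (f g : X → X)
    (hf : Function.Bijective f) (hg : Function.Bijective g) (hc : f ∘ g = g ∘ f) :
    ∃ Φ : PresentedGroup (permRels f g) ≃* PresentedGroup (permRelsQ f g),
      ∀ x : X, Φ (PresentedGroup.of x) = PresentedGroup.of (Quot.mk (pgRel f g) x) :=
  stmt18_general f g
end YBE
end
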